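/- arXiv:2304.10921 — 4 statements merged into one kernel-verified Lean document; each statement's English description precedes it below -/
import Mathlib

section
/- Let G = (N, E) be a directed graph satisfying Assumption 1 (V_t ∩ V_h = ∅), let V_ud be gradient-distributed with respect to G_ud = (N, E_ud), and let V̄_ud be gradient-distributed with respect to Ḡ_ud = (N, Ē_ud). Then the proposed controller is distributed with respect to G: for every i ∈ N and all states X, X' ∈ (ℝ^d)^n with x_j = x'_j for every j ∈ N_i(G) ∪ {i}, one has f_i(X) = f_i(X'). -/
/-!
Node `i` of the controller only reads `∇_i V_ud` and, when `i` is a tail, `∇_i V̄_ud`.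
Every neighbour of `i` in `G_ud` is a neighbour in `G`. In `Ḡ_ud` node `i` gains the reversed
unidirectional edges `(i, j)` with `(j, i) ∈ E_di`, which make `i` a head; by Assumption 1 a tail
is never a head, so at tails the neighbourhoods in `Ḡ_ud` and `G` coincide.
-/

open scoped RealInnerProductSpace

/-- The set of unidirectional edges of a directed graph with edge set `E`:
edges `(i,j) ∈ E` whose reverse `(j,i)` is not in `E`. -/
def Edi {n : ℕ} (E : Set (Fin n × Fin n)) : Set (Fin n × Fin n) :=
  {p | p ∈ E ∧ (p.2, p.1) ∉ E}

/-- The set of bidirectional edges of a directed graph with edge set `E`. -/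
def Eud {n : ℕ} (E : Set (Fin n × Fin n)) : Set (Fin n × Fin n) :=
  {p | p ∈ E ∧ (p.2, p.1) ∈ E}

/-- The set of tails of unidirectional edges. -/
def Vt {n : ℕ} (E : Set (Fin n × Fin n)) : Set (Fin n) :=
  {i | ∃ j, (i, j) ∈ Edi E}

/-- The set of heads of unidirectional edges. -/
def Vh {n : ℕ} (E : Set (Fin n × Fin n)) : Set (Fin n) :=
  {i | ∃ j, (j, i) ∈ Edi E}

/-- The undirected closure edge set `Ē_ud = E ∪ {(i,j) : (j,i) ∈ E_di}`. -/
def Ebar {n : ℕ} (E : Set (Fin n × Fin n)) : Set (Fin n × Fin n) :=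
  E ∪ {p | (p.2, p.1) ∈ Edi E}

/-- The gradient `∇_i V(X) ∈ ℝ^d` of `V : (ℝ^d)^n → ℝ` with respect to the state `x_i`
of agent `i`. -/
noncomputable def gradI {d n : ℕ} (V : (Fin n → EuclideanSpace ℝ (Fin d)) → ℝ)
    (i : Fin n) (X : Fin n → EuclideanSpace ℝ (Fin d)) : EuclideanSpace ℝ (Fin d) :=
  gradient (fun z => V (Function.update X i z)) (X i)

/-- `V` is gradient-distributed with respect to the graph with edge set `F`: for all `i`
and states agreeing on `N_i ∪ {i}`, the `i`-th gradient agrees. -/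
def GradDistrib {d n : ℕ} (F : Set (Fin n × Fin n))
    (V : (Fin n → EuclideanSpace ℝ (Fin d)) → ℝ) : Prop :=
  ∀ i : Fin n, ∀ X X' : Fin n → EuclideanSpace ℝ (Fin d),
    (∀ j, (i, j) ∈ F → X j = X' j) → X i = X' i → gradI V i X = gradI V i X'

/-- The constrained projection `ḡ` (explicit solution of the minimization problem
`min ‖g − (λ a + η b)/2‖²` s.t. `⟨g,a⟩ ≥ 0`, `⟨g,b⟩ ≥ 0`), where `a = ∇_i V̄_ud(X)`,
`b = ∇_i V_ud(X)`.  The final case is unreachable for `λ, η > 0`. -/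
noncomputable def gbar {d : ℕ} (lam eta : ℝ) (a b : EuclideanSpace ℝ (Fin d)) :
    EuclideanSpace ℝ (Fin d) :=
  let gh := (2 : ℝ)⁻¹ • (lam • a + eta • b)
  if 0 ≤ ⟪gh, a⟫ ∧ 0 ≤ ⟪gh, b⟫ then gh
  else if ⟪gh, a⟫ < 0 ∧ 0 ≤ ⟪gh, b⟫ then gh - (⟪gh, a⟫ / ‖a‖ ^ 2) • a
  else if 0 ≤ ⟪gh, a⟫ ∧ ⟪gh, b⟫ < 0 then gh - (⟪gh, b⟫ / ‖b‖ ^ 2) • b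
  else gh

open Classical in
/-- The proposed distributed controller `f_i(X)`:
`f_i(X) = −ḡ_i(X) − κ_i ∇_i V_ud(X)` for `i ∈ V_t` and
`f_i(X) = −μ_i ∇_i V_ud(X)` for `i ∈ N \ V_t`. -/
noncomputable def ctrl {d n : ℕ} (E : Set (Fin n × Fin n))
    (Vud Vbud : (Fin n → EuclideanSpace ℝ (Fin d)) → ℝ)
    (lam eta kappa mu : Fin n → ℝ) (i : Fin n)
    (X : Fin n → EuclideanSpace ℝ (Fin d)) : EuclideanSpace ℝ (Fin d) :=
  if i ∈ Vt E then
    -gbar (lam i) (eta i) (gradI Vbud i X) (gradI Vud i X) - kappa i • gradI Vud i X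
  else
    -(mu i • gradI Vud i X)

theorem GradDistrib.gradI_eq_of_neighbors_subset {d n : ℕ} {F E : Set (Fin n × Fin n)}
    {V : (Fin n → EuclideanSpace ℝ (Fin d)) → ℝ} (hV : GradDistrib F V) {i : Fin n}
    (hFE : ∀ j, (i, j) ∈ F → (i, j) ∈ E) {X X' : Fin n → EuclideanSpace ℝ (Fin d)}
    (hX : ∀ j, (i, j) ∈ E → X j = X' j) (hi : X i = X' i) :
    gradI V i X = gradI V i X' :=
  hV i X X' (fun j hj => hX j (hFE j hj)) hi

theorem mem_of_mem_Ebar_of_notMem_Vh {n : ℕ} {E : Set (Fin n × Fin n)} {i j : Fin n}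
    (h : (i, j) ∈ Ebar E) (hi : i ∉ Vh E) : (i, j) ∈ E :=
  h.resolve_right fun hji => hi ⟨j, hji⟩

theorem ctrl_congr {d n : ℕ} {E : Set (Fin n × Fin n)}
    {Vud Vbud : (Fin n → EuclideanSpace ℝ (Fin d)) → ℝ} {lam eta kappa mu : Fin n → ℝ}
    {i : Fin n} {X X' : Fin n → EuclideanSpace ℝ (Fin d)}
    (hud : gradI Vud i X = gradI Vud i X')
    (hbud : i ∈ Vt E → gradI Vbud i X = gradI Vbud i X') :
    ctrl E Vud Vbud lam eta kappa mu i X = ctrl E Vud Vbud lam eta kappa mu i X' := by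
  unfold ctrl
  split_ifs with ht
  · rw [hud, hbud ht]
  · rw [hud]

theorem controller_is_distributed_general
    {d n : ℕ} (E : Set (Fin n × Fin n))
    (hassu : Vt E ∩ Vh E = ∅)
    (Vud Vbud : (Fin n → EuclideanSpace ℝ (Fin d)) → ℝ)
    (hVud : GradDistrib (Eud E) Vud) (hVbud : GradDistrib (Ebar E) Vbud)
    (lam eta kappa mu : Fin n → ℝ)
    (i : Fin n) (X X' : Fin n → EuclideanSpace ℝ (Fin d))
    (hXX' : ∀ j, (i, j) ∈ E → X j = X' j) (hii : X i = X' i) :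
    ctrl E Vud Vbud lam eta kappa mu i X = ctrl E Vud Vbud lam eta kappa mu i X' := by
  have tail_not_head : i ∈ Vt E → i ∉ Vh E := fun ht hh =>
    Set.eq_empty_iff_forall_notMem.mp hassu i ⟨ht, hh⟩
  refine ctrl_congr ?_ fun ht => ?_
  · exact hVud.gradI_eq_of_neighbors_subset (fun _ hj => hj.1) hXX' hii
  · exact hVbud.gradI_eq_of_neighbors_subset
      (fun _ hj => mem_of_mem_Ebar_of_notMem_Vh hj (tail_not_head ht)) hXX' hii

/-- Theorem 1: under Assumption 1 and gradient-distributedness of `V_ud` w.r.t. `G_ud`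
and of `V̄_ud` w.r.t. `Ḡ_ud`, the proposed controller is distributed with respect to `G`:
whenever two states agree on `N_i(G) ∪ {i}`, the control inputs of agent `i` agree. -/
theorem controller_is_distributed
    {d n : ℕ} (E : Set (Fin n × Fin n)) (hE : ∀ p ∈ E, p.1 ≠ p.2)
    (hassu : Vt E ∩ Vh E = ∅)
    (Vud Vbud : (Fin n → EuclideanSpace ℝ (Fin d)) → ℝ)
    (hVud_diff : Differentiable ℝ Vud) (hVbud_diff : Differentiable ℝ Vbud)
    (hVud : GradDistrib (Eud E) Vud) (hVbud : GradDistrib (Ebar E) Vbud)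
    (lam eta kappa mu : Fin n → ℝ)
    (hlam : ∀ i ∈ Vt E, 0 < lam i) (heta : ∀ i ∈ Vt E, 0 < eta i)
    (hkappa : ∀ i ∈ Vt E, 0 ≤ kappa i) (hmu : ∀ i ∉ Vt E, 0 < mu i)
    (i : Fin n) (X X' : Fin n → EuclideanSpace ℝ (Fin d))
    (hXX' : ∀ j, (i, j) ∈ E → X j = X' j) (hii : X i = X' i) :
    ctrl E Vud Vbud lam eta kappa mu i X = ctrl E Vud Vbud lam eta kappa mu i X' :=
  controller_is_distributed_general E hassu Vud Vbud hVud hVbud lam eta kappa mu i X X' hXX' hii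
end

section
/- Let a, b ∈ ℝ^d, λ, η > 0, and ĝ = (λ a + η b)/2. Define ḡ ∈ ℝ^d piecewise: ḡ = ĝ if ⟨ĝ, a⟩ ≥ 0 and ⟨ĝ, b⟩ ≥ 0; ḡ = ĝ − (⟨ĝ, a⟩/‖a‖²) a if ⟨ĝ, a⟩ < 0 and ⟨ĝ, b⟩ ≥ 0; ḡ = ĝ − (⟨ĝ, b⟩/‖b‖²) b if ⟨ĝ, a⟩ ≥ 0 and ⟨ĝ, b⟩ < 0. Then ḡ is feasible (⟨ḡ, a⟩ ≥ 0 and ⟨ḡ, b⟩ ≥ 0), and ḡ minimizes ‖g − ĝ‖² over all g ∈ ℝ^d satisfying ⟨g, a⟩ ≥ 0 and ⟨g, b⟩ ≥ 0, i.e., ‖ḡ − ĝ‖ ≤ ‖g − ĝ‖ for every such feasible g. -/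
open scoped RealInnerProductSpace

section Projection

variable {E : Type*} [NormedAddCommGroup E] [InnerProductSpace ℝ E]

/-- Orthogonal projection onto the hyperplane `aᗮ` (the identity when `a = 0`). -/
noncomputable def hyperplaneProj (a x : E) : E := x - (⟪x, a⟫ / ‖a‖ ^ 2) • a

theorem inner_hyperplaneProj_self (a x : E) : ⟪hyperplaneProj a x, a⟫ = 0 := by
  rw [hyperplaneProj, inner_sub_left, real_inner_smul_left, real_inner_self_eq_norm_sq,
    div_mul_cancel_of_imp (fun h => by simp_all), sub_self]

theorem hyperplaneProj_smul_add_smul (a b : E) (lam eta : ℝ) :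
    hyperplaneProj a (lam • a + eta • b) = eta • hyperplaneProj a b := by
  rcases eq_or_ne a 0 with rfl | ha
  · simp [hyperplaneProj]
  have hna : ‖a‖ ^ 2 ≠ 0 := by positivity
  simp only [hyperplaneProj, inner_add_left, real_inner_smul_left, real_inner_self_eq_norm_sq]
  rw [add_div, mul_div_assoc, div_self hna, mul_one, mul_div_assoc]
  module

theorem inner_hyperplaneProj_eq_norm_sq (a x : E) :
    ⟪hyperplaneProj a x, x⟫ = ‖hyperplaneProj a x‖ ^ 2 := by
  have hx : x = hyperplaneProj a x + (⟪x, a⟫ / ‖a‖ ^ 2) • a := by simp [hyperplaneProj]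
  nth_rewrite 2 [hx]
  rw [inner_add_right, real_inner_smul_right, inner_hyperplaneProj_self, mul_zero, add_zero,
    real_inner_self_eq_norm_sq]

theorem inner_hyperplaneProj_smul_add_smul_nonneg (a b : E) (lam : ℝ) {eta : ℝ}
    (heta : 0 ≤ eta) : 0 ≤ ⟪hyperplaneProj a (lam • a + eta • b), b⟫ := by
  rw [hyperplaneProj_smul_add_smul, real_inner_smul_left, inner_hyperplaneProj_eq_norm_sq]
  positivity

theorem norm_hyperplaneProj_sub_le {a x g : E} (hx : ⟪x, a⟫ ≤ 0) (hg : 0 ≤ ⟪g, a⟫) :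
    ‖hyperplaneProj a x - x‖ ≤ ‖g - x‖ := by
  rcases eq_or_ne a 0 with rfl | ha
  · simp [hyperplaneProj]
  have hna : 0 < ‖a‖ := norm_pos_iff.mpr ha
  have hdist : ‖hyperplaneProj a x - x‖ = -⟪x, a⟫ / ‖a‖ := by
    rw [hyperplaneProj, sub_sub_cancel_left, norm_neg, norm_smul, Real.norm_eq_abs,
      abs_div, abs_of_nonpos hx, abs_of_pos (by positivity)]
    field_simp
  calc ‖hyperplaneProj a x - x‖ = -⟪x, a⟫ / ‖a‖ := hdist
    _ ≤ ⟪g - x, a⟫ / ‖a‖ := by rw [inner_sub_left]; gcongr; linarith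
    _ ≤ ‖g - x‖ := by rw [div_le_iff₀ hna]; exact real_inner_le_norm _ _

theorem inner_nonneg_or_inner_nonneg (a b : E) {lam eta : ℝ} (hlam : 0 < lam) (heta : 0 < eta) :
    0 ≤ ⟪lam • a + eta • b, a⟫ ∨ 0 ≤ ⟪lam • a + eta • b, b⟫ := by
  by_contra! h
  have hself : ⟪lam • a + eta • b, lam • a + eta • b⟫ =
      lam * ⟪lam • a + eta • b, a⟫ + eta * ⟪lam • a + eta • b, b⟫ := by
    rw [inner_add_right, real_inner_smul_right, real_inner_smul_right]
  have := real_inner_self_nonneg (x := lam • a + eta • b)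
  nlinarith [mul_pos hlam (neg_pos.mpr h.1), mul_pos heta (neg_pos.mpr h.2)]

end Projection

/-- The piecewise-defined `ḡ` is feasible (`⟨ḡ, a⟩ ≥ 0` and `⟨ḡ, b⟩ ≥ 0`) and minimizes
`‖g − ĝ‖²` over all `g` with `⟨g, a⟩ ≥ 0` and `⟨g, b⟩ ≥ 0`, where
`ĝ = (λ a + η b)/2`. -/
theorem gbar_is_projection {d : ℕ} (a b : EuclideanSpace ℝ (Fin d))
    (lam eta : ℝ) (hlam : 0 < lam) (heta : 0 < eta)
    (ghat : EuclideanSpace ℝ (Fin d)) (hghat : ghat = (2 : ℝ)⁻¹ • (lam • a + eta • b)) :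
    0 ≤ ⟪gbar lam eta a b, a⟫ ∧
    0 ≤ ⟪gbar lam eta a b, b⟫ ∧
    ∀ g : EuclideanSpace ℝ (Fin d),
      0 ≤ ⟪g, a⟫ → 0 ≤ ⟪g, b⟫ → ‖gbar lam eta a b - ghat‖ ≤ ‖g - ghat‖ := by
  subst hghat
  have hab : (2 : ℝ)⁻¹ • (lam • a + eta • b) = (2⁻¹ * lam) • a + (2⁻¹ * eta) • b := by module
  have hba : (2 : ℝ)⁻¹ • (lam • a + eta • b) = (2⁻¹ * eta) • b + (2⁻¹ * lam) • a := by module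
  dsimp only [gbar]
  split_ifs with h₁ h₂ h₃
  · exact ⟨h₁.1, h₁.2, fun g _ _ => by simp⟩
  · refine ⟨(inner_hyperplaneProj_self _ _).ge, ?_,
      fun g hg _ => norm_hyperplaneProj_sub_le h₂.1.le hg⟩
    rw [hab]
    exact inner_hyperplaneProj_smul_add_smul_nonneg a b _ (by positivity)
  · refine ⟨?_, (inner_hyperplaneProj_self _ _).ge,
      fun g _ hg => norm_hyperplaneProj_sub_le h₃.2.le hg⟩
    rw [hba]
    exact inner_hyperplaneProj_smul_add_smul_nonneg b a _ (by positivity)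
  · exfalso
    rw [hab] at h₁ h₂ h₃
    rcases inner_nonneg_or_inner_nonneg a b (by positivity : 0 < 2⁻¹ * lam)
      (by positivity : 0 < 2⁻¹ * eta) with h | h
    · exact h₃ ⟨h, not_le.mp fun hb => h₁ ⟨h, hb⟩⟩
    · exact h₂ ⟨not_le.mp fun ha => h₁ ⟨ha, h⟩, h⟩
end

section
/- Let G = (N, E) be a directed graph with tail set V_t, and let V_ud, V̄_ud : (ℝ^d)^n → ℝ be differentiable. Then for every state X ∈ (ℝ^d)^n, the proposed controller satisfies ⟨∇_i V_ud(X), ḡ_i(X)⟩ ≥ 0 for every i ∈ V_t, and consequently the dissipation inequality Σ_{i∈N} ⟨∇_i V_ud(X), f_i(X)⟩ = −Σ_{i∈V_t} (⟨∇_i V_ud(X), ḡ_i(X)⟩ + κ_i ‖∇_i V_ud(X)‖²) − Σ_{i∈N\V_t} μ_i ‖∇_i V_ud(X)‖² ≤ 0 holds. -/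
/-!
The dissipation identity is a termwise computation, so everything rests on
`⟪b, gbar lam eta a b⟫ ≥ 0` with `ĝ = (lam • a + eta • b) / 2`, checked branch by branch.
If `ĝ` already makes nonnegative angles with `a` and `b` there is nothing to prove; projecting
out `b` leaves a vector orthogonal to `b`; projecting out `a` leaves, after the `lam`-terms cancel,
`eta / 2` times the Gram determinant of `a, b` divided by `‖a‖²`, which is nonnegative by
Cauchy–Schwarz. Both angles cannot be obtuse, since `2 ‖ĝ‖² = lam ⟪ĝ, a⟫ + eta ⟪ĝ, b⟫`.
-/

open scoped RealInnerProductSpace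

section Projection

variable {F : Type*} [NormedAddCommGroup F] [InnerProductSpace ℝ F]

theorem inner_sub_proj_self (v b : F) : ⟪b, v - (⟪v, b⟫ / ‖b‖ ^ 2) • b⟫ = 0 := by
  rcases eq_or_ne b 0 with rfl | hb
  · simp
  have hb2 : ‖b‖ ^ 2 ≠ 0 := by positivity
  rw [inner_sub_right, real_inner_smul_right, real_inner_self_eq_norm_sq, real_inner_comm,
    div_mul_cancel₀ _ hb2, sub_self]

theorem inner_sub_proj_eq {a : F} (ha : a ≠ 0) (v b : F) :
    ⟪b, v - (⟪v, a⟫ / ‖a‖ ^ 2) • a⟫ = (‖a‖ ^ 2 * ⟪v, b⟫ - ⟪v, a⟫ * ⟪a, b⟫) / ‖a‖ ^ 2 := by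
  have ha2 : ‖a‖ ^ 2 ≠ 0 := by positivity
  rw [inner_sub_right, real_inner_smul_right, real_inner_comm v b, real_inner_comm a b]
  field_simp

theorem inner_sub_proj_nonneg {lam eta : ℝ} (heta : 0 ≤ eta) (a b : F) :
    let g := (2 : ℝ)⁻¹ • (lam • a + eta • b)
    0 ≤ ⟪b, g - (⟪g, a⟫ / ‖a‖ ^ 2) • a⟫ := by
  intro g
  rcases eq_or_ne a 0 with rfl | ha
  · simp only [g, smul_zero, zero_add, inner_zero_right, zero_div, sub_zero,
      real_inner_smul_right, real_inner_self_eq_norm_sq]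
    positivity
  have hcs := real_inner_mul_inner_self_le a b
  have hnum : ‖a‖ ^ 2 * ⟪g, b⟫ - ⟪g, a⟫ * ⟪a, b⟫ =
      eta / 2 * (⟪a, a⟫ * ⟪b, b⟫ - ⟪a, b⟫ * ⟪a, b⟫) := by
    simp only [g, real_inner_smul_left, inner_add_left, ← real_inner_self_eq_norm_sq,
      real_inner_comm a b]
    ring
  rw [inner_sub_proj_eq ha, hnum]
  exact div_nonneg (mul_nonneg (by positivity) (sub_nonneg.mpr hcs)) (by positivity)

theorem not_inner_neg_and_inner_neg {lam eta : ℝ} (hlam : 0 ≤ lam) (heta : 0 ≤ eta) (a b : F) :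
    let g := (2 : ℝ)⁻¹ • (lam • a + eta • b)
    ¬(⟪g, a⟫ < 0 ∧ ⟪g, b⟫ < 0) := by
  intro g ⟨ha, hb⟩
  have hgg : ⟪g, g⟫ = (2 : ℝ)⁻¹ * (lam * ⟪g, a⟫ + eta * ⟪g, b⟫) := by
    change ⟪g, (2 : ℝ)⁻¹ • (lam • a + eta • b)⟫ = _
    rw [real_inner_smul_right, inner_add_right, real_inner_smul_right, real_inner_smul_right]
  have hg : g = 0 := by
    rw [← real_inner_self_nonpos, hgg]
    nlinarith
  simp [hg] at ha

end Projection

theorem inner_gbar_nonneg {d : ℕ} {lam eta : ℝ} (hlam : 0 ≤ lam) (heta : 0 ≤ eta)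
    (a b : EuclideanSpace ℝ (Fin d)) : 0 ≤ ⟪b, gbar lam eta a b⟫ := by
  have hboth := not_inner_neg_and_inner_neg hlam heta a b
  simp only [gbar]
  split_ifs with h₁ h₂ h₃
  · rw [real_inner_comm]
    exact h₁.2
  · exact inner_sub_proj_nonneg heta a b
  · exact (inner_sub_proj_self _ b).ge
  · exact (hboth ⟨by grind, by grind⟩).elim

open Classical in
theorem inner_ctrl {d n : ℕ} (E : Set (Fin n × Fin n))
    (Vud Vbud : (Fin n → EuclideanSpace ℝ (Fin d)) → ℝ) (lam eta kappa mu : Fin n → ℝ)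
    (i : Fin n) (X : Fin n → EuclideanSpace ℝ (Fin d)) :
    ⟪gradI Vud i X, ctrl E Vud Vbud lam eta kappa mu i X⟫ =
      if i ∈ Vt E then
        -(⟪gradI Vud i X, gbar (lam i) (eta i) (gradI Vbud i X) (gradI Vud i X)⟫ +
          kappa i * ‖gradI Vud i X‖ ^ 2)
      else -(mu i * ‖gradI Vud i X‖ ^ 2) := by
  unfold ctrl
  split_ifs
  · rw [inner_sub_right, inner_neg_right, real_inner_smul_right, real_inner_self_eq_norm_sq]
    ring
  · rw [inner_neg_right, real_inner_smul_right, real_inner_self_eq_norm_sq]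

open Classical in
theorem controller_dissipation_general
    {d n : ℕ} (E : Set (Fin n × Fin n))
    (Vud Vbud : (Fin n → EuclideanSpace ℝ (Fin d)) → ℝ)
    (lam eta kappa mu : Fin n → ℝ)
    (hlam : ∀ i ∈ Vt E, 0 < lam i) (heta : ∀ i ∈ Vt E, 0 < eta i)
    (hkappa : ∀ i ∈ Vt E, 0 ≤ kappa i) (hmu : ∀ i ∉ Vt E, 0 < mu i)
    (X : Fin n → EuclideanSpace ℝ (Fin d)) :
    (∀ i ∈ Vt E,
      0 ≤ ⟪gradI Vud i X, gbar (lam i) (eta i) (gradI Vbud i X) (gradI Vud i X)⟫) ∧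
    (∑ i : Fin n, ⟪gradI Vud i X, ctrl E Vud Vbud lam eta kappa mu i X⟫ =
      -(∑ i ∈ Finset.univ.filter (fun i => i ∈ Vt E),
          (⟪gradI Vud i X, gbar (lam i) (eta i) (gradI Vbud i X) (gradI Vud i X)⟫ +
            kappa i * ‖gradI Vud i X‖ ^ 2)) -
        ∑ i ∈ Finset.univ.filter (fun i => i ∉ Vt E), mu i * ‖gradI Vud i X‖ ^ 2) ∧
    (∑ i : Fin n, ⟪gradI Vud i X, ctrl E Vud Vbud lam eta kappa mu i X⟫ ≤ 0) := by
  have hgbar : ∀ i ∈ Vt E,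
      0 ≤ ⟪gradI Vud i X, gbar (lam i) (eta i) (gradI Vbud i X) (gradI Vud i X)⟫ :=
    fun i hi => inner_gbar_nonneg (hlam i hi).le (heta i hi).le _ _
  refine ⟨hgbar, ?_, Finset.sum_nonpos fun i _ => ?_⟩
  · simp only [inner_ctrl]
    rw [Finset.sum_ite, Finset.sum_neg_distrib, Finset.sum_neg_distrib, sub_eq_add_neg]
  · rw [inner_ctrl]
    split_ifs with hi
    · have := hkappa i hi
      exact neg_nonpos.mpr (add_nonneg (hgbar i hi) (by positivity))
    · exact neg_nonpos.mpr (mul_nonneg (hmu i hi).le (sq_nonneg _))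

open Classical in
/-- For every state `X`, the proposed controller satisfies
`⟨∇_i V_ud(X), ḡ_i(X)⟩ ≥ 0` for all `i ∈ V_t`, and the dissipation identity/inequality
`Σ_{i∈N} ⟨∇_i V_ud(X), f_i(X)⟩
  = −Σ_{i∈V_t} (⟨∇_i V_ud(X), ḡ_i(X)⟩ + κ_i ‖∇_i V_ud(X)‖²)
    − Σ_{i∈N∖V_t} μ_i ‖∇_i V_ud(X)‖² ≤ 0`. -/
theorem controller_dissipation
    {d n : ℕ} (E : Set (Fin n × Fin n)) (hE : ∀ p ∈ E, p.1 ≠ p.2)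
    (Vud Vbud : (Fin n → EuclideanSpace ℝ (Fin d)) → ℝ)
    (hVud_diff : Differentiable ℝ Vud) (hVbud_diff : Differentiable ℝ Vbud)
    (lam eta kappa mu : Fin n → ℝ)
    (hlam : ∀ i ∈ Vt E, 0 < lam i) (heta : ∀ i ∈ Vt E, 0 < eta i)
    (hkappa : ∀ i ∈ Vt E, 0 ≤ kappa i) (hmu : ∀ i ∉ Vt E, 0 < mu i)
    (X : Fin n → EuclideanSpace ℝ (Fin d)) :
    (∀ i ∈ Vt E,
      0 ≤ ⟪gradI Vud i X, gbar (lam i) (eta i) (gradI Vbud i X) (gradI Vud i X)⟫) ∧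
    (∑ i : Fin n, ⟪gradI Vud i X, ctrl E Vud Vbud lam eta kappa mu i X⟫ =
      -(∑ i ∈ Finset.univ.filter (fun i => i ∈ Vt E),
          (⟪gradI Vud i X, gbar (lam i) (eta i) (gradI Vbud i X) (gradI Vud i X)⟫ +
            kappa i * ‖gradI Vud i X‖ ^ 2)) -
        ∑ i ∈ Finset.univ.filter (fun i => i ∉ Vt E), mu i * ‖gradI Vud i X‖ ^ 2) ∧
    (∑ i : Fin n, ⟪gradI Vud i X, ctrl E Vud Vbud lam eta kappa mu i X⟫ ≤ 0) :=
  controller_dissipation_general E Vud Vbud lam eta kappa mu hlam heta hkappa hmu X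
end

section
/- Let G = (N, E) be a directed graph with tail set V_t, let V_ud, V̄_ud : (ℝ^d)^n → ℝ be differentiable, and suppose κ_i = 0 for all i ∈ V_t. Let X ∈ (ℝ^d)^n be a state such that the implication [∇_i V_ud(X) = 0 for all i ∈ N \ V_t] ⟹ [∇_i V_ud(X) = 0 for all i ∈ V_t] holds. If Σ_{i∈N} ⟨∇_i V_ud(X), f_i(X)⟩ = 0 for the proposed controller, then ∇_i V_ud(X) = 0 for every i ∈ N. -/
open scoped RealInnerProductSpace

lemma gbar_inner_nonneg {d : ℕ} {lam eta : ℝ} (hl : 0 < lam) (he : 0 < eta)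
    (a b : EuclideanSpace ℝ (Fin d)) : 0 ≤ ⟪b, gbar lam eta a b⟫ := by
  set gh : EuclideanSpace ℝ (Fin d) := (2 : ℝ)⁻¹ • (lam • a + eta • b) with hgh
  have hba : ⟪b,a⟫ = ⟪a,b⟫ := real_inner_comm a b
  have hA : ⟪gh, a⟫ = (2:ℝ)⁻¹ * (lam * ⟪a,a⟫ + eta * ⟪a,b⟫) := by
    rw [hgh, real_inner_smul_left, inner_add_left, real_inner_smul_left,
      real_inner_smul_left, hba]
  have hB : ⟪gh, b⟫ = (2:ℝ)⁻¹ * (lam * ⟪a,b⟫ + eta * ⟪b,b⟫) := by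
    rw [hgh, real_inner_smul_left, inner_add_left, real_inner_smul_left,
      real_inner_smul_left]
  have hbg : ⟪b, gh⟫ = ⟪gh, b⟫ := real_inner_comm gh b
  have hCS : ⟪a,b⟫ * ⟪a,b⟫ ≤ ⟪a,a⟫ * ⟪b,b⟫ := real_inner_mul_inner_self_le a b
  have haa : ⟪a,a⟫ = ‖a‖^2 := real_inner_self_eq_norm_sq a
  have hbb : ⟪b,b⟫ = ‖b‖^2 := real_inner_self_eq_norm_sq b
  rw [gbar]
  simp only [← hgh]
  clear_value gh
  split_ifs with h1 h2 h3
  · rw [hbg]; exact h1.2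
  · have ha0 : a ≠ 0 := by
      intro h; apply absurd h2.1; rw [h, inner_zero_right]; exact lt_irrefl 0
    have hA2 : (0:ℝ) < ‖a‖^2 := pow_pos (norm_pos_iff.mpr ha0) 2
    rw [inner_sub_right, real_inner_smul_right, hbg, hba, sub_nonneg,
      div_mul_eq_mul_div, div_le_iff₀ hA2]
    rw [hA, hB, ← haa]
    nlinarith [mul_le_mul_of_nonneg_left hCS he.le]
  · have hb0 : b ≠ 0 := by
      intro h; apply absurd h3.2; rw [h, inner_zero_right]; exact lt_irrefl 0
    have hB2 : (0:ℝ) < ‖b‖^2 := pow_pos (norm_pos_iff.mpr hb0) 2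
    rw [inner_sub_right, real_inner_smul_right, hbg, hbb]
    field_simp
    simp
  · exfalso
    push_neg at h1 h2 h3
    have ha : ⟪gh,a⟫ < 0 := by
      by_contra h
      push_neg at h
      exact absurd (h3 h) (not_le.mpr (h1 h))
    have hbneg : ⟪gh,b⟫ < 0 := h2 ha
    have ha0 : a ≠ 0 := by
      intro h; apply absurd ha; rw [h, inner_zero_right]; exact lt_irrefl 0
    have hb0 : b ≠ 0 := by
      intro h; apply absurd hbneg; rw [h, inner_zero_right]; exact lt_irrefl 0
    have hA2 : (0:ℝ) < ⟪a,a⟫ := by rw [haa]; exact pow_pos (norm_pos_iff.mpr ha0) 2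
    have hB2 : (0:ℝ) < ⟪b,b⟫ := by rw [hbb]; exact pow_pos (norm_pos_iff.mpr hb0) 2
    have h5 : eta * ⟪a,b⟫ < -(lam * ⟪a,a⟫) := by nlinarith [hA]
    have h6 : lam * ⟪a,b⟫ < -(eta * ⟪b,b⟫) := by nlinarith [hB]
    have hlc : lam * ⟪a,b⟫ < 0 := by nlinarith [mul_pos he hB2]
    have hint1 : 0 < (lam * ⟪a,b⟫) * (eta * ⟪a,b⟫ + lam * ⟪a,a⟫) :=
      mul_pos_of_neg_of_neg hlc (by linarith)
    have hint2 : 0 < (-(lam * ⟪a,a⟫)) * (lam * ⟪a,b⟫ + eta * ⟪b,b⟫) :=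
      mul_pos_of_neg_of_neg (by nlinarith [mul_pos hl hA2]) (by linarith)
    nlinarith [hCS, mul_pos hl he, hint1, hint2]


/-- Suppose `κ_i = 0` for all `i ∈ V_t` and the state `X` satisfies the implication
`[∇_i V_ud(X) = 0 ∀ i ∉ V_t] ⟹ [∇_i V_ud(X) = 0 ∀ i ∈ V_t]`.  If the dissipation
`Σ_{i∈N} ⟨∇_i V_ud(X), f_i(X)⟩` vanishes, then `∇_i V_ud(X) = 0` for every `i ∈ N`. -/
theorem zero_dissipation_implies_critical
    {d n : ℕ} (E : Set (Fin n × Fin n)) (hE : ∀ p ∈ E, p.1 ≠ p.2)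
    (Vud Vbud : (Fin n → EuclideanSpace ℝ (Fin d)) → ℝ)
    (hVud_diff : Differentiable ℝ Vud) (hVbud_diff : Differentiable ℝ Vbud)
    (lam eta kappa mu : Fin n → ℝ)
    (hlam : ∀ i ∈ Vt E, 0 < lam i) (heta : ∀ i ∈ Vt E, 0 < eta i)
    (hkappa : ∀ i ∈ Vt E, kappa i = 0) (hmu : ∀ i ∉ Vt E, 0 < mu i)
    (X : Fin n → EuclideanSpace ℝ (Fin d))
    (hX : (∀ i ∉ Vt E, gradI Vud i X = 0) → ∀ i ∈ Vt E, gradI Vud i X = 0)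
    (hsum : ∑ i : Fin n, ⟪gradI Vud i X, ctrl E Vud Vbud lam eta kappa mu i X⟫ = 0) :
    ∀ i, gradI Vud i X = 0 := by
  have key : ∀ i : Fin n,
      ⟪gradI Vud i X, ctrl E Vud Vbud lam eta kappa mu i X⟫ ≤ 0 := by
    intro i
    by_cases hi : i ∈ Vt E
    · rw [ctrl, if_pos hi, hkappa i hi, zero_smul, sub_zero, inner_neg_right,
        neg_nonpos]
      exact gbar_inner_nonneg (hlam i hi) (heta i hi) _ _
    · rw [ctrl, if_neg hi, inner_neg_right, real_inner_smul_right, neg_nonpos]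
      exact mul_nonneg (hmu i hi).le (real_inner_self_nonneg)
  have hall : ∀ i ∈ Finset.univ,
      ⟪gradI Vud i X, ctrl E Vud Vbud lam eta kappa mu i X⟫ = 0 := by
    intro i _
    exact ((Finset.sum_eq_zero_iff_of_nonpos (fun i _ => key i)).mp hsum) i
      (Finset.mem_univ i)
  have hnotVt : ∀ i ∉ Vt E, gradI Vud i X = 0 := by
    intro i hi
    have h0 := hall i (Finset.mem_univ i)
    rw [ctrl, if_neg hi, inner_neg_right, real_inner_smul_right,
      neg_eq_zero] at h0
    have : ⟪gradI Vud i X, gradI Vud i X⟫ = 0 := by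
      rcases mul_eq_zero.mp h0 with h | h
      · exact absurd h (ne_of_gt (hmu i hi))
      · exact h
    exact inner_self_eq_zero.mp this
  intro i
  by_cases hi : i ∈ Vt E
  · exact hX hnotVt i hi
  · exact hnotVt i hi
end
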